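/- Let a : ℕ → ℤ be a sequence of integers such that for every i ≥ 1: |a_i| ≥ 2; if a_i = 2 then a_{i+1} ≥ 2; and if a_i = −2 then a_{i+1} ≤ −2. Then the finite continued fraction values c_n = a_0 + 1/(a_1 + 1/(⋯ + 1/a_n)) converge as n → ∞ to a real number x, and the NICF expansion of x is exactly the sequence (a_i): x is irrational and for every i ≥ 0 its NICF digit at index i equals a_i. -/

import Mathlib

open Filter Pointwise

/-- NICF iterates: `x₀ = x`, `x_{i+1} = 1/(x_i - ⌊x_i⌉)`, with `⌊t⌉ = round t = ⌊t + 1/2⌋`. -/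
noncomputable def nicfX (x : ℝ) : ℕ → ℝ
  | 0 => x
  | n + 1 => 1 / (nicfX x n - round (nicfX x n))

/-- The `i`-th NICF digit of `x`. -/
noncomputable def nicfDigit (x : ℝ) (i : ℕ) : ℤ := round (nicfX x i)

/-- The `i`-th NICF digit is genuinely defined: the algorithm has not terminated before
step `i` (i.e. `x_m ≠ a_m` for all `m < i`). -/
def nicfDefined (x : ℝ) (i : ℕ) : Prop :=
  ∀ m, m < i → nicfX x m ≠ (nicfDigit x m : ℝ)

/-- `NICFset r`: the reals all of whose NICF digits `a_i` with `i ≥ 1` satisfy `|a_i| ≤ r`. -/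
def NICFset (r : ℤ) : Set ℝ :=
  {x | ∀ i : ℕ, 1 ≤ i → nicfDefined x i → |nicfDigit x i| ≤ r}

/-- `cfTail a m i` is the finite continued fraction `a_i + 1/(a_{i+1} + 1/(⋯ + 1/a_{i+m}))`. -/
noncomputable def cfTail (a : ℕ → ℤ) : ℕ → ℕ → ℝ
  | 0, i => (a i : ℝ)
  | m + 1, i => (a i : ℝ) + 1 / cfTail a m (i + 1)

open Topology

/-!
For `i ≥ 1` every finite tail `a_i + 1/(a_{i+1} + ⋯)` has absolute value at least `2`, with the
sign of `a_i`; on such values `t ↦ 1/t` contracts distances by a factor `4`, so the tails converge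
to limits `y_i` with `y_i = a_i + 1/y_{i+1}`. The conditions on the digits `±2` make the bound
strict on the positive side: `y_i ≤ -2` or `2 < y_i` for `i ≥ 1`, i.e. `1/y_{i+1} ∈ [-1/2, 1/2)`,
which is exactly what makes `round y_i = a_i`, so the NICF algorithm started at `y_0` runs through
the `y_i`. If `y_0` were rational, all `y_i` would be, and since `0 < |y_i - a_i| < 1` the
denominator of `y_{i+1} = 1/(y_i - a_i)` would be strictly smaller than that of `y_i`.
-/

def NICFAdmissible (a : ℕ → ℤ) : Prop :=
  ∀ i : ℕ, 1 ≤ i → 2 ≤ |a i| ∧ (a i = 2 → 2 ≤ a (i + 1)) ∧ (a i = -2 → a (i + 1) ≤ -2)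

lemma abs_one_div_le_half {t : ℝ} (ht : 2 ≤ |t|) : |1 / t| ≤ 1 / 2 := by
  rw [abs_div, abs_one]
  exact one_div_le_one_div_of_le two_pos ht

lemma abs_one_div_sub_one_div_le {s t : ℝ} (hs : 2 ≤ |s|) (ht : 2 ≤ |t|) :
    |1 / s - 1 / t| ≤ |s - t| / 4 := by
  have hs0 : s ≠ 0 := by rintro rfl; norm_num at hs
  have ht0 : t ≠ 0 := by rintro rfl; norm_num at ht
  rw [div_sub_div _ _ hs0 ht0, one_mul, mul_one, abs_div, abs_mul, abs_sub_comm]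
  gcongr
  nlinarith

lemma two_lt_intCast_add_one_div {n : ℤ} {t : ℝ} (hn : 2 ≤ n) (ht : 2 ≤ |t|)
    (h2 : n = 2 → 0 < t) : 2 < n + 1 / t := by
  rcases hn.eq_or_lt with rfl | h3
  · have := one_div_pos.mpr (h2 rfl)
    push_cast
    linarith
  · have : (3 : ℝ) ≤ n := by exact_mod_cast h3
    linarith [(abs_le.mp (abs_one_div_le_half ht)).1]

lemma intCast_add_one_div_lt_neg_two {n : ℤ} {t : ℝ} (hn : n ≤ -2) (ht : 2 ≤ |t|)
    (h2 : n = -2 → t < 0) : n + 1 / t < -2 := by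
  have := two_lt_intCast_add_one_div (n := -n) (t := -t) (by omega) (by rwa [abs_neg])
    fun h => neg_pos.mpr (h2 (by omega))
  rw [Int.cast_neg, one_div_neg_eq_neg_one_div] at this
  linarith

lemma round_intCast_add_one_div {n : ℤ} {t : ℝ} (ht : t ≤ -2 ∨ 2 < t) :
    round (n + 1 / t) = n := by
  rw [add_comm, round_add_intCast, round_eq_zero_iff.mpr, zero_add]
  rcases ht with ht | ht
  · exact ⟨(abs_le.mp (abs_one_div_le_half (le_abs'.mpr (Or.inl ht)))).1,
      (one_div_neg.mpr (by linarith)).trans (by norm_num)⟩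
  · exact ⟨by linarith [one_div_pos.mpr (by linarith : (0 : ℝ) < t)],
      one_div_lt_one_div_of_lt two_pos ht⟩

lemma cfTail_zero (a : ℕ → ℤ) (i : ℕ) : cfTail a 0 i = a i := rfl

lemma cfTail_succ (a : ℕ → ℤ) (m i : ℕ) :
    cfTail a (m + 1) i = a i + 1 / cfTail a m (i + 1) := rfl

namespace NICFAdmissible

variable {a : ℕ → ℤ}

lemma two_le_abs_of_bounds (ha : NICFAdmissible a) {i : ℕ} (hi : 1 ≤ i) {z : ℝ}
    (hz : (2 ≤ a i → 2 ≤ z) ∧ (a i ≤ -2 → z ≤ -2)) : 2 ≤ |z| := by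
  rcases le_abs'.mp (ha i hi).1 with h | h
  · exact le_abs'.mpr (Or.inl (hz.2 h))
  · exact le_abs'.mpr (Or.inr (hz.1 h))

lemma cfTail_bounds (ha : NICFAdmissible a) (m : ℕ) :
    ∀ i, 1 ≤ i → (2 ≤ a i → 2 ≤ cfTail a m i) ∧ (a i ≤ -2 → cfTail a m i ≤ -2) := by
  induction m with
  | zero =>
    exact fun i _ => ⟨fun h => show (2 : ℝ) ≤ a i by exact_mod_cast h,
      fun h => show (a i : ℝ) ≤ -2 by exact_mod_cast h⟩
  | succ m ih =>
    intro i hi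
    have hnext := ih (i + 1) (by omega)
    have hT := ha.two_le_abs_of_bounds (by omega) hnext
    rw [cfTail_succ]
    exact ⟨fun h2 => (two_lt_intCast_add_one_div h2 hT
        fun e => by linarith [hnext.1 ((ha i hi).2.1 e)]).le,
      fun h2 => (intCast_add_one_div_lt_neg_two h2 hT
        fun e => by linarith [hnext.2 ((ha i hi).2.2 e)]).le⟩

lemma abs_cfTail_succ_sub_le (ha : NICFAdmissible a) (m : ℕ) :
    ∀ i, |cfTail a (m + 1) i - cfTail a m i| ≤ 1 / 2 * (1 / 4) ^ m := by
  induction m with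
  | zero =>
    intro i
    simp only [cfTail_succ, cfTail_zero, add_sub_cancel_left, pow_zero, mul_one]
    exact abs_one_div_le_half (by exact_mod_cast (ha (i + 1) (by omega)).1)
  | succ m ih =>
    intro i
    have h₁ := ha.two_le_abs_of_bounds (by omega) (ha.cfTail_bounds (m + 1) (i + 1) (by omega))
    have h₀ := ha.two_le_abs_of_bounds (by omega) (ha.cfTail_bounds m (i + 1) (by omega))
    calc |cfTail a (m + 1 + 1) i - cfTail a (m + 1) i|
        = |1 / cfTail a (m + 1) (i + 1) - 1 / cfTail a m (i + 1)| := by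
          rw [cfTail_succ a (m + 1) i, cfTail_succ a m i, add_sub_add_left_eq_sub]
      _ ≤ |cfTail a (m + 1) (i + 1) - cfTail a m (i + 1)| / 4 :=
          abs_one_div_sub_one_div_le h₁ h₀
      _ ≤ 1 / 2 * (1 / 4) ^ m / 4 := by gcongr; exact ih (i + 1)
      _ = 1 / 2 * (1 / 4) ^ (m + 1) := by ring

lemma cauchySeq_cfTail (ha : NICFAdmissible a) (i : ℕ) : CauchySeq (fun m => cfTail a m i) :=
  cauchySeq_of_le_geometric (1 / 4) (1 / 2) (by norm_num) fun m => by
    rw [Real.dist_eq, abs_sub_comm]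
    exact ha.abs_cfTail_succ_sub_le m i

variable {y : ℕ → ℝ}

lemma bounds_of_tendsto_cfTail (ha : NICFAdmissible a)
    (hy : ∀ i, Tendsto (fun m => cfTail a m i) atTop (𝓝 (y i))) {i : ℕ} (hi : 1 ≤ i) :
    (2 ≤ a i → 2 ≤ y i) ∧ (a i ≤ -2 → y i ≤ -2) :=
  ⟨fun h => ge_of_tendsto' (hy i) fun m => (ha.cfTail_bounds m i hi).1 h,
    fun h => le_of_tendsto' (hy i) fun m => (ha.cfTail_bounds m i hi).2 h⟩

lemma eq_add_one_div_of_tendsto_cfTail (ha : NICFAdmissible a)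
    (hy : ∀ i, Tendsto (fun m => cfTail a m i) atTop (𝓝 (y i))) (i : ℕ) :
    y i = a i + 1 / y (i + 1) := by
  have habs := ha.two_le_abs_of_bounds (i := i + 1) (by omega)
    (ha.bounds_of_tendsto_cfTail hy (by omega))
  have hne : y (i + 1) ≠ 0 := abs_pos.mp (by linarith)
  exact tendsto_nhds_unique ((hy i).comp (tendsto_add_atTop_nat 1))
    ((tendsto_const_nhds.div (hy (i + 1)) hne).const_add (a i : ℝ))

lemma le_neg_two_or_two_lt_of_tendsto_cfTail (ha : NICFAdmissible a)
    (hy : ∀ i, Tendsto (fun m => cfTail a m i) atTop (𝓝 (y i))) (i : ℕ) :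
    y (i + 1) ≤ -2 ∨ 2 < y (i + 1) := by
  have hb := ha.bounds_of_tendsto_cfTail hy (i := i + 2) (by omega)
  have hT := ha.two_le_abs_of_bounds (by omega) hb
  have hai := ha (i + 1) (by omega)
  rw [ha.eq_add_one_div_of_tendsto_cfTail hy (i + 1)]
  rcases le_abs'.mp hai.1 with h | h
  · exact Or.inl (intCast_add_one_div_lt_neg_two h hT fun e => by linarith [hb.2 (hai.2.2 e)]).le
  · exact Or.inr (two_lt_intCast_add_one_div h hT fun e => by linarith [hb.1 (hai.2.1 e)])

end NICFAdmissible

lemma Rat.den_inv_sub_intCast_lt {q : ℚ} {n : ℤ} (h0 : q ≠ n) (h1 : |q - n| < 1) :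
    (q - n)⁻¹.den < q.den := by
  have := Rat.num_lt_denom_iff.mpr h1
  rw [Rat.num_abs_eq_abs_num, Rat.den_abs_eq_den, Rat.sub_intCast_den, Int.abs_eq_natAbs] at this
  rw [Rat.den_inv_of_ne_zero (sub_ne_zero.mpr h0)]
  exact_mod_cast this

section CompleteQuotients

variable {a : ℕ → ℤ} {y : ℕ → ℝ}

lemma nicfX_eq_of_eq_add_one_div (hrec : ∀ i, y i = a i + 1 / y (i + 1))
    (hrange : ∀ i, y (i + 1) ≤ -2 ∨ 2 < y (i + 1)) (i : ℕ) : nicfX (y 0) i = y i := by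
  induction i with
  | zero => rfl
  | succ i ih =>
    rw [nicfX, ih, hrec i, round_intCast_add_one_div (hrange i), add_sub_cancel_left,
      one_div_one_div]

lemma irrational_of_eq_add_one_div (hrec : ∀ i, y i = a i + 1 / y (i + 1))
    (hy : ∀ i, 1 < |y (i + 1)|) : Irrational (y 0) := by
  suffices ∀ (d : ℕ) (q : ℚ), q.den = d → ∀ i, (q : ℝ) ≠ y i from
    fun ⟨q, hq⟩ => this _ q rfl 0 hq
  intro d
  induction d using Nat.strong_induction_on with
  | _ d ih =>
  rintro q rfl i hq
  have hfrac : ((q - a i : ℚ) : ℝ) = 1 / y (i + 1) := by push_cast; rw [hq, hrec i]; ring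
  have hne : q ≠ a i := fun h => by
    rw [h, sub_self, Rat.cast_zero] at hfrac
    exact one_div_ne_zero (abs_pos.mp (one_pos.trans (hy i))) hfrac.symm
  have hlt : |q - a i| < 1 := by
    have : |((q - a i : ℚ) : ℝ)| < 1 := by
      rw [hfrac, abs_div, abs_one]
      exact (div_lt_one (by linarith [hy i])).mpr (hy i)
    exact_mod_cast this
  exact ih _ (Rat.den_inv_sub_intCast_lt hne hlt) _ rfl (i + 1)
    (by rw [Rat.cast_inv, hfrac, one_div, inv_inv])

end CompleteQuotients

theorem nicf_expansion_of_valid_digits (a : ℕ → ℤ)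
    (h : ∀ i : ℕ, 1 ≤ i →
      2 ≤ |a i| ∧ (a i = 2 → 2 ≤ a (i + 1)) ∧ (a i = -2 → a (i + 1) ≤ -2)) :
    ∃ x : ℝ, Filter.Tendsto (fun n => cfTail a n 0) Filter.atTop (nhds x) ∧
      Irrational x ∧ ∀ i : ℕ, nicfDigit x i = a i := by
  have ha : NICFAdmissible a := h
  choose y hy using fun i => cauchySeq_tendsto_of_complete (ha.cauchySeq_cfTail i)
  have hrec := ha.eq_add_one_div_of_tendsto_cfTail hy
  have hrange := ha.le_neg_two_or_two_lt_of_tendsto_cfTail hy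
  refine ⟨y 0, hy 0, irrational_of_eq_add_one_div hrec fun i => ?_, fun i => ?_⟩
  · rcases hrange i with hneg | hpos
    · exact lt_abs.mpr (Or.inr (by linarith))
    · exact lt_abs.mpr (Or.inl (by linarith))
  · rw [nicfDigit, nicfX_eq_of_eq_add_one_div hrec hrange, hrec i]
    exact round_intCast_add_one_div (hrange i)
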